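/- For a probability density p on [0,2π)^d with 2π-periodic, continuously differentiable extension, and a model density q(x; φ) ∝ exp(φᵀ S(x)) with S smooth and 2π-periodic, the score matching objective J(φ) = (1/2)∫ p(x)‖∇ log q(x;φ) - ∇ log p(x)‖² dx equals C + ∫ p(x)[ (1/2)‖∇_x log q(x;φ)‖² + Σ_i ∂²/∂x_i² log q(x;φ) ] dx, where C does not depend on φ. -/

import Mathlib

open Real MeasureTheory Finset

/-- First partial derivative of `f : ℝ^d → ℝ` in coordinate `i` at `x`. -/
noncomputable def pd {d : ℕ} (f : (Fin d → ℝ) → ℝ) (i : Fin d)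
    (x : Fin d → ℝ) : ℝ :=
  deriv (fun t => f (Function.update x i t)) (x i)

/-- Diagonal second partial derivative of `f : ℝ^d → ℝ` in coordinate `i` at `x`. -/
noncomputable def diagSecond {d : ℕ} (f : (Fin d → ℝ) → ℝ) (i : Fin d)
    (x : Fin d → ℝ) : ℝ :=
  iteratedDeriv 2 (fun t => f (Function.update x i t)) (x i)

/-- The `d`-dimensional torus fundamental domain `[0, 2π)^d`. -/
def torusBox (d : ℕ) : Set (Fin d → ℝ) :=
  Set.univ.pi fun _ : Fin d => Set.Ico (0 : ℝ) (2 * π)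

/- Auxiliary lemmas -/

lemma hasDerivAt_slice {d : ℕ} {g : (Fin d → ℝ) → ℝ} (hg : Differentiable ℝ g)
    (x : Fin d → ℝ) (i : Fin d) (t : ℝ) :
    HasDerivAt (fun s => g (Function.update x i s))
      (fderiv ℝ g (Function.update x i t) (Pi.single i 1)) t :=
  (hg _).hasFDerivAt.comp_hasDerivAt t (hasDerivAt_update x i t)

lemma pd_eq_fderiv {d : ℕ} {g : (Fin d → ℝ) → ℝ} (hg : Differentiable ℝ g)
    (i : Fin d) (x : Fin d → ℝ) :
    pd g i x = fderiv ℝ g x (Pi.single i 1) := by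
  have h := (hasDerivAt_slice hg x i (x i)).deriv
  rwa [Function.update_eq_self] at h

lemma hasDerivAt_slice' {d : ℕ} {g : (Fin d → ℝ) → ℝ} (hg : Differentiable ℝ g)
    (x : Fin d → ℝ) (i : Fin d) :
    HasDerivAt (fun s => g (Function.update x i s)) (pd g i x) (x i) := by
  have h := hasDerivAt_slice hg x i (x i)
  rwa [Function.update_eq_self, ← pd_eq_fderiv hg] at h

lemma pd_slice {d : ℕ} (g : (Fin d → ℝ) → ℝ) (i : Fin d) (x : Fin d → ℝ) (t : ℝ) :
    pd g i (Function.update x i t) =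
      deriv (fun s => g (Function.update x i s)) t := by
  simp only [pd, Function.update_idem, Function.update_self]

lemma diagSecond_eq {d : ℕ} (g : (Fin d → ℝ) → ℝ) (i : Fin d) (x : Fin d → ℝ) :
    diagSecond g i x = pd (pd g i) i x := by
  have h : (fun t => pd g i (Function.update x i t)) =
      deriv (fun s => g (Function.update x i s)) := funext fun t => pd_slice g i x t
  rw [diagSecond, pd, h]
  rw [show (2:ℕ) = 1 + 1 from rfl, iteratedDeriv_succ, iteratedDeriv_one]

lemma contDiff_pd {d : ℕ} {g : (Fin d → ℝ) → ℝ} (hg : ContDiff ℝ 2 g) (i : Fin d) :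
    ContDiff ℝ 1 (pd g i) := by
  have h : pd g i = fun x => fderiv ℝ g x (Pi.single i 1) :=
    funext fun x => pd_eq_fderiv (hg.differentiable two_ne_zero) i x
  rw [h]
  exact (hg.fderiv_right (le_refl 2)).clm_apply contDiff_const

lemma continuous_pd {d : ℕ} {g : (Fin d → ℝ) → ℝ} (hg : ContDiff ℝ 1 g) (i : Fin d) :
    Continuous (pd g i) := by
  have h : pd g i = fun x => fderiv ℝ g x (Pi.single i 1) :=
    funext fun x => pd_eq_fderiv (hg.differentiable one_ne_zero) i x
  rw [h]
  exact (hg.continuous_fderiv one_ne_zero).clm_apply continuous_const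

lemma torusBox_subset_Icc (d : ℕ) :
    torusBox d ⊆ Set.Icc (fun _ => 0) (fun _ => 2 * π) := by
  rw [← Set.pi_univ_Icc]
  exact Set.pi_mono fun i _ => Set.Ico_subset_Icc_self

lemma integrableOn_torusBox {d : ℕ} {f : (Fin d → ℝ) → ℝ} (hf : Continuous f) :
    IntegrableOn f (torusBox d) volume :=
  ((hf.continuousOn).integrableOn_compact isCompact_Icc).mono_set (torusBox_subset_Icc d)

lemma periodic_deriv' {f : ℝ → ℝ} {c : ℝ} (h : Function.Periodic f c) :
    Function.Periodic (deriv f) c := by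
  intro t
  have hc : (fun x => f (x + c)) = f := funext h
  rw [← deriv_comp_add_const f c t, hc]

/-- Integral over the torus box of an `i`-th partial derivative of a `C¹` function
periodic in coordinate `i` vanishes. -/
lemma integral_pd_eq_zero {d : ℕ} (F : (Fin d → ℝ) → ℝ) (hF : ContDiff ℝ 1 F)
    (i : Fin d)
    (hper : ∀ x : Fin d → ℝ,
      Function.Periodic (fun t => F (Function.update x i t)) (2 * π)) :
    ∫ x in torusBox d, pd F i x = 0 := by
  obtain ⟨n, rfl⟩ : ∃ n, d = n + 1 := ⟨d - 1, (Nat.succ_pred_eq_of_pos i.pos).symm⟩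
  set a : Fin (n + 1) → ℝ := fun _ => 0 with ha
  set b : Fin (n + 1) → ℝ := fun _ => 2 * π with hb
  have hle : a ≤ b := fun _ => by positivity
  classical
  have key := MeasureTheory.integral_divergence_of_hasFDerivAt_off_countable' a b hle
    (fun j => if j = i then F else fun _ => 0)
    (fun j x => if j = i then fderiv ℝ F x else 0) ∅ Set.countable_empty
    (fun j => by
      by_cases h : j = i <;> simp [h, hF.continuous.continuousOn, continuousOn_const])
    (fun x _ j => by
      by_cases h : j = i
      · simpa [h] using (hF.differentiable one_ne_zero x).hasFDerivAt
      · simpa [h] using hasFDerivAt_const (0 : ℝ) x)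
    (by
      have h : (fun x => ∑ j, (if j = i then fderiv ℝ F x else 0) (Pi.single j 1)) =
          fun x => fderiv ℝ F x (Pi.single i 1) := by
        funext x
        rw [Finset.sum_eq_single i (fun j _ hj => by simp [hj]) (by simp)]
        simp
      rw [h]
      exact (((hF.continuous_fderiv one_ne_zero).clm_apply
        continuous_const).continuousOn).integrableOn_compact isCompact_Icc)
  have hsum : (fun x => ∑ j, (if j = i then fderiv ℝ F x else 0) (Pi.single j 1)) =
      pd F i := by
    funext x
    rw [Finset.sum_eq_single i (fun j _ hj => by simp [hj]) (by simp)]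
    simp [pd_eq_fderiv (hF.differentiable one_ne_zero)]
  have hbox : ∫ x in torusBox (n + 1), pd F i x = ∫ x in Set.Icc a b, pd F i x := by
    apply setIntegral_congr_set
    rw [torusBox, volume_pi]
    exact MeasureTheory.Measure.univ_pi_Ico_ae_eq_Icc
  rw [hbox]
  calc ∫ x in Set.Icc a b, pd F i x
      = ∫ x in Set.Icc a b, ∑ j, (if j = i then fderiv ℝ F x else 0) (Pi.single j 1) := by
        rw [hsum]
    _ = ∑ j : Fin (n + 1),
          ((∫ x in Set.Icc (a ∘ j.succAbove) (b ∘ j.succAbove),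
              (if j = i then F else fun _ => 0) (j.insertNth (b j) x)) -
           ∫ x in Set.Icc (a ∘ j.succAbove) (b ∘ j.succAbove),
              (if j = i then F else fun _ => 0) (j.insertNth (a j) x)) := key
    _ = 0 := by
        apply Finset.sum_eq_zero
        intro j _
        by_cases h : j = i
        · subst h
          have hFF : ∀ y : Fin n → ℝ, F (j.insertNth (b j) y) = F (j.insertNth (a j) y) := by
            intro y
            have h0 := hper (j.insertNth (a j) y) 0
            simpa [Fin.update_insertNth, ha, hb] using h0
          rw [sub_eq_zero]
          exact integral_congr_ae (.of_forall fun y => by simp [hFF y])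
        · simp [h]

theorem score_matching_objective_torus (d m : ℕ)
    (p : (Fin d → ℝ) → ℝ) (S : (Fin d → ℝ) → Fin m → ℝ)
    (hp : ContDiff ℝ 1 p) (hppos : ∀ x, 0 < p x)
    (hpper : ∀ (i : Fin d) (x : Fin d → ℝ),
      Function.Periodic (fun t => p (Function.update x i t)) (2 * π))
    (hS : ∀ j, ContDiff ℝ (⊤ : ℕ∞) fun x => S x j)
    (hSper : ∀ (j : Fin m) (i : Fin d) (x : Fin d → ℝ),
      Function.Periodic (fun t => S (Function.update x i t) j) (2 * π))
    (logq : (Fin m → ℝ) → (Fin d → ℝ) → ℝ)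
    (hlogq : ∀ φ x, logq φ x = ∑ j, φ j * S x j)
    (J : (Fin m → ℝ) → ℝ)
    (hJ : ∀ φ, J φ = (1 / 2) * ∫ x in torusBox d,
      p x * ∑ i, (pd (logq φ) i x - pd (fun y => Real.log (p y)) i x) ^ 2)
    (hInt1 : ∀ φ, IntegrableOn
      (fun x => p x * ∑ i, (pd (logq φ) i x - pd (fun y => Real.log (p y)) i x) ^ 2)
      (torusBox d) volume)
    (hInt2 : ∀ φ, IntegrableOn
      (fun x => p x * ((1 / 2) * ∑ i, (pd (logq φ) i x) ^ 2 +
        ∑ i, diagSecond (logq φ) i x)) (torusBox d) volume)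
    (hInt3 : IntegrableOn
      (fun x => p x * ∑ i, (pd (fun y => Real.log (p y)) i x) ^ 2)
      (torusBox d) volume) :
    ∃ C : ℝ, ∀ φ : Fin m → ℝ,
      J φ = C + ∫ x in torusBox d,
        p x * ((1 / 2) * ∑ i, (pd (logq φ) i x) ^ 2 +
          ∑ i, diagSecond (logq φ) i x) := by
  classical
  refine ⟨(1 / 2) * ∫ x in torusBox d,
      p x * ∑ i, (pd (fun y => Real.log (p y)) i x) ^ 2, fun φ => ?_⟩
  have hq : logq φ = fun x => ∑ j, φ j * S x j := funext (hlogq φ)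
  have hcd : ContDiff ℝ 2 (logq φ) := by
    rw [hq]
    exact (ContDiff.sum fun j _ => contDiff_const.mul (hS j)).of_le (WithTop.coe_le_coe.mpr le_top)
  have hpdiff : Differentiable ℝ p := hp.differentiable one_ne_zero
  have hqper : ∀ (i : Fin d) (x : Fin d → ℝ),
      Function.Periodic (fun t => logq φ (Function.update x i t)) (2 * π) := by
    intro i x t
    simp only [hq]
    exact Finset.sum_congr rfl fun j _ => congrArg (φ j * ·) (hSper j i x t)
  -- fact 1 : p x * ∂ᵢ log p = ∂ᵢ p
  have fact1 : ∀ (i : Fin d) (x : Fin d → ℝ),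
      p x * pd (fun y => Real.log (p y)) i x = pd p i x := by
    intro i x
    have hP := hasDerivAt_slice' hpdiff x i
    have hne : p (Function.update x i (x i)) ≠ 0 := by
      rw [Function.update_eq_self]; exact (hppos x).ne'
    have hlog := hP.log hne
    rw [Function.update_eq_self] at hlog
    have hd : pd (fun y => Real.log (p y)) i x = pd p i x / p x := hlog.deriv
    rw [hd, mul_div_cancel₀ _ (hppos x).ne']
  -- fact 2 : product rule for `Fᵢ = ∂ᵢ(log q) * p`
  have fact2 : ∀ (i : Fin d) (x : Fin d → ℝ),
      pd (fun y => pd (logq φ) i y * p y) i x =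
        diagSecond (logq φ) i x * p x + pd (logq φ) i x * pd p i x := by
    intro i x
    have hA := hasDerivAt_slice' ((contDiff_pd hcd i).differentiable one_ne_zero) x i
    have hP := hasDerivAt_slice' hpdiff x i
    have hmul := (hA.mul hP).deriv
    rw [Function.update_eq_self] at hmul
    rw [diagSecond_eq]
    calc pd (fun y => pd (logq φ) i y * p y) i x
        = deriv (fun t => pd (logq φ) i (Function.update x i t) *
            p (Function.update x i t)) (x i) := rfl
      _ = _ := hmul
  -- periodicity of the slices of Fᵢ
  have hFiper : ∀ (i : Fin d) (x : Fin d → ℝ),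
      Function.Periodic
        (fun t => (fun y => pd (logq φ) i y * p y) (Function.update x i t)) (2 * π) := by
    intro i x
    have hA : Function.Periodic (fun t => pd (logq φ) i (Function.update x i t)) (2 * π) := by
      have hsl : (fun t => pd (logq φ) i (Function.update x i t)) =
          deriv (fun s => logq φ (Function.update x i s)) :=
        funext fun t => pd_slice _ i x t
      rw [hsl]
      exact periodic_deriv' (hqper i x)
    exact hA.mul (hpper i x)
  have hFiC : ∀ i : Fin d, ContDiff ℝ 1 (fun y => pd (logq φ) i y * p y) :=
    fun i => (contDiff_pd hcd i).mul hp
  have hzero : ∀ i : Fin d,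
      ∫ x in torusBox d, pd (fun y => pd (logq φ) i y * p y) i x = 0 :=
    fun i => integral_pd_eq_zero _ (hFiC i) i (hFiper i)
  have hKint : ∀ i : Fin d, IntegrableOn
      (fun x => pd (fun y => pd (logq φ) i y * p y) i x) (torusBox d) volume :=
    fun i => integrableOn_torusBox (continuous_pd (hFiC i) i)
  have hK : IntegrableOn
      (fun x => ∑ i, pd (fun y => pd (logq φ) i y * p y) i x) (torusBox d) volume :=
    integrable_finset_sum _ fun i _ => hKint i
  have hL : IntegrableOn
      (fun x => (1 / 2) * (p x * ∑ i, (pd (fun y => Real.log (p y)) i x) ^ 2))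
      (torusBox d) volume := hInt3.const_mul _
  have hKzero : ∫ x in torusBox d, ∑ i, pd (fun y => pd (logq φ) i y * p y) i x = 0 := by
    rw [integral_finset_sum _ fun i _ => hKint i]
    exact Finset.sum_eq_zero fun i _ => hzero i
  -- pointwise identity
  have key : ∀ x : Fin d → ℝ,
      (1 / 2) * (p x * ∑ i, (pd (logq φ) i x - pd (fun y => Real.log (p y)) i x) ^ 2)
        = p x * ((1 / 2) * ∑ i, (pd (logq φ) i x) ^ 2 + ∑ i, diagSecond (logq φ) i x)
          + (1 / 2) * (p x * ∑ i, (pd (fun y => Real.log (p y)) i x) ^ 2)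
          - ∑ i, pd (fun y => pd (logq φ) i y * p y) i x := by
    intro x
    have e1 : ∑ i, (pd (logq φ) i x - pd (fun y => Real.log (p y)) i x) ^ 2
        = ∑ i, (pd (logq φ) i x) ^ 2
          - 2 * ∑ i, pd (logq φ) i x * pd (fun y => Real.log (p y)) i x
          + ∑ i, (pd (fun y => Real.log (p y)) i x) ^ 2 := by
      rw [Finset.mul_sum, ← Finset.sum_sub_distrib, ← Finset.sum_add_distrib]
      exact Finset.sum_congr rfl fun i _ => by ring
    have e2 : ∑ i, pd (fun y => pd (logq φ) i y * p y) i x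
        = p x * ∑ i, diagSecond (logq φ) i x
          + p x * ∑ i, pd (logq φ) i x * pd (fun y => Real.log (p y)) i x := by
      rw [Finset.mul_sum, Finset.mul_sum, ← Finset.sum_add_distrib]
      refine Finset.sum_congr rfl fun i _ => ?_
      rw [fact2 i x]
      linear_combination (-(pd (logq φ) i x)) * (fact1 i x)
    rw [e1]
    linear_combination e2
  -- assemble
  calc J φ = (1 / 2) * ∫ x in torusBox d,
        p x * ∑ i, (pd (logq φ) i x - pd (fun y => Real.log (p y)) i x) ^ 2 := hJ φ
    _ = ∫ x in torusBox d, (1 / 2) *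
        (p x * ∑ i, (pd (logq φ) i x - pd (fun y => Real.log (p y)) i x) ^ 2) :=
        (integral_const_mul _ _).symm
    _ = ∫ x in torusBox d,
        (p x * ((1 / 2) * ∑ i, (pd (logq φ) i x) ^ 2 + ∑ i, diagSecond (logq φ) i x)
          + (1 / 2) * (p x * ∑ i, (pd (fun y => Real.log (p y)) i x) ^ 2)
          - ∑ i, pd (fun y => pd (logq φ) i y * p y) i x) := by
        exact setIntegral_congr_fun (by
          exact (MeasurableSet.univ_pi fun i => measurableSet_Ico)) fun x _ => key x
    _ = (∫ x in torusBox d,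
          p x * ((1 / 2) * ∑ i, (pd (logq φ) i x) ^ 2 + ∑ i, diagSecond (logq φ) i x))
        + (∫ x in torusBox d,
          (1 / 2) * (p x * ∑ i, (pd (fun y => Real.log (p y)) i x) ^ 2))
        - ∫ x in torusBox d, ∑ i, pd (fun y => pd (logq φ) i y * p y) i x := by
        have hHL : IntegrableOn (fun x =>
            p x * ((1 / 2) * ∑ i, (pd (logq φ) i x) ^ 2 + ∑ i, diagSecond (logq φ) i x)
              + (1 / 2) * (p x * ∑ i, (pd (fun y => Real.log (p y)) i x) ^ 2))
            (torusBox d) volume := (hInt2 φ).add hL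
        rw [integral_sub hHL hK, integral_add (hInt2 φ) hL]
    _ = _ := by
        rw [hKzero, integral_const_mul]
        ring
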